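/- Under the model assumptions — reward r bounded by M_R and L_R-Lipschitz in (μ,ν), transition kernel P L_P-Lipschitz in (μ,ν), and all policies in the admissible class L_Q-Lipschitz in μ — let π* and π̄ be two policy sequences in the admissible class that induce identical mean-field flows (μ_t^∞, action choices) in the infinite-agent system (e.g. π̄ is a localization of π*). Then for γ with γS_P < 1, the N-agent discounted value v_MARL(x₀^N, π̄) with initial empirical distribution μ₀ satisfies |v_MARL(x₀^N, π̄) − v_MF(μ₀, π*)| ≤ (1/(1−γ))(M_R + L_R√(|U|))/√N + ((√(|X|)+√(|U|))/√N) · (S_R C_P/(S_P−1)) · (1/(1−γS_P) − 1/(1−γ)), where C_P = 2+L_P, S_R = (M_R+2L_R)+L_Q(M_R+L_R), S_P = (1+2L_P)+L_Q(1+L_P). -/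

import Mathlib

open Finset

def IsPmf {X : Type*} [Fintype X] (μ : X → ℝ) : Prop :=
  (∀ x, 0 ≤ μ x) ∧ ∑ x, μ x = 1

noncomputable def l1 {X : Type*} [Fintype X] (f : X → ℝ) : ℝ := ∑ x, |f x|

/-- Empirical distribution of a configuration of `N` agents. -/
noncomputable def emp {X : Type*} [Fintype X] [DecidableEq X] {N : ℕ}
    (s : Fin N → X) : X → ℝ :=
  fun x => (∑ i, if s i = x then (1 : ℝ) else 0) / N

/-- The mean-field action distribution `ν^MF(μ, π)`. -/
noncomputable def nuMF {X U : Type*} [Fintype X] [Fintype U]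
    (μ : X → ℝ) (π : X → (X → ℝ) → U → ℝ) : U → ℝ :=
  fun u => ∑ x, π x μ u * μ x

/-- The one-step mean-field state distribution update `P^MF(μ, π)`. -/
noncomputable def PMF' {X U : Type*} [Fintype X] [Fintype U]
    (P : X → U → (X → ℝ) → (U → ℝ) → X → ℝ)
    (μ : X → ℝ) (π : X → (X → ℝ) → U → ℝ) : X → ℝ :=
  fun y => ∑ x, ∑ u, P x u μ (nuMF μ π) y * π x μ u * μ x

/-- The mean-field average reward `r^MF(μ, π)`. -/
noncomputable def rMF {X U : Type*} [Fintype X] [Fintype U]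
    (r : X → U → (X → ℝ) → (U → ℝ) → ℝ)
    (μ : X → ℝ) (π : X → (X → ℝ) → U → ℝ) : ℝ :=
  ∑ x, ∑ u, r x u μ (nuMF μ π) * π x μ u * μ x

/-- Law of the `N`-agent joint-state process at time `t`, started from the deterministic
joint state `x₀`. -/
noncomputable def Wproc {X U : Type*} [Fintype X] [Fintype U] [DecidableEq X] [DecidableEq U]
    {N : ℕ} (P : X → U → (X → ℝ) → (U → ℝ) → X → ℝ)
    (π : ℕ → X → (X → ℝ) → U → ℝ) (x₀ : Fin N → X) : ℕ → (Fin N → X) → ℝ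
  | 0 => fun s => if s = x₀ then 1 else 0
  | t + 1 => fun s' => ∑ s : Fin N → X, Wproc P π x₀ t s *
      ∑ a : Fin N → U, (∏ i, π t (s i) (emp s) (a i)) *
        ∏ i, P (s i) (a i) (emp s) (emp a) (s' i)

/-- The `N`-agent discounted value `v_MARL(x₀, π)`: expected discounted sum of the
population-average reward under the `N`-agent dynamics driven by `π`. -/
noncomputable def vMARL {X U : Type*} [Fintype X] [Fintype U] [DecidableEq X] [DecidableEq U]
    {N : ℕ} (γ : ℝ) (r : X → U → (X → ℝ) → (U → ℝ) → ℝ)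
    (P : X → U → (X → ℝ) → (U → ℝ) → X → ℝ)
    (π : ℕ → X → (X → ℝ) → U → ℝ) (x₀ : Fin N → X) : ℝ :=
  ∑' t : ℕ, γ ^ t * ∑ s : Fin N → X, Wproc P π x₀ t s *
    ∑ a : Fin N → U, (∏ i, π t (s i) (emp s) (a i)) *
      ((1 / N : ℝ) * ∑ i, r (s i) (a i) (emp s) (emp a))

/-- Deterministic mean-field flow of state distributions. -/
noncomputable def muFlow {X U : Type*} [Fintype X] [Fintype U]
    (P : X → U → (X → ℝ) → (U → ℝ) → X → ℝ)
    (π : ℕ → X → (X → ℝ) → U → ℝ) (μ₀ : X → ℝ) : ℕ → X → ℝ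
  | 0 => μ₀
  | t + 1 => PMF' P (muFlow P π μ₀ t) (π t)

/-- The mean-field discounted value `v_MF(μ₀, π)`. -/
noncomputable def vMF {X U : Type*} [Fintype X] [Fintype U]
    (γ : ℝ) (r : X → U → (X → ℝ) → (U → ℝ) → ℝ)
    (P : X → U → (X → ℝ) → (U → ℝ) → X → ℝ)
    (π : ℕ → X → (X → ℝ) → U → ℝ) (μ₀ : X → ℝ) : ℝ :=
  ∑' t : ℕ, γ ^ t * rMF r (muFlow P π μ₀ t) (π t)

/-!
Track the expected `ℓ¹` distance `e t = 𝔼 ‖emp sₜ - μₜ‖₁` between the empirical state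
distribution of the `N`-agent chain and the mean-field flow. In one step the empirical
distribution of the sampled actions, and then of the sampled next states, lies within
`√|U| / √N`, resp. `√|X| / √N`, of its conditional mean (a variance bound for independent
samples); the remaining error comes from evaluating `π`, `P` and `r` at `emp sₜ` instead of
`μₜ` and is controlled by the Lipschitz constants. This gives
`e (t + 1) ≤ (2 √|X| + L_P √|U|) / √N + S_P e t` with `e 0 = 0`, and a reward error at time
`t` of at most `L_R √|U| / √N + S_R e t`; summing against `γ ^ t` gives the bound. Since `π̄`
agrees with `π*` along the mean-field flow, both have the same mean-field value.
-/

section Pmf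

variable {A Y : Type*} [Fintype A] [Fintype Y]

lemma l1_nonneg (f : A → ℝ) : 0 ≤ l1 f :=
  Finset.sum_nonneg fun _ _ => abs_nonneg _

lemma l1_sub_le (f g h : A → ℝ) : l1 (f - h) ≤ l1 (f - g) + l1 (g - h) := by
  rw [l1, l1, l1, ← Finset.sum_add_distrib]
  exact Finset.sum_le_sum fun a _ => abs_sub_le (f a) (g a) (h a)

namespace IsPmf

variable {w : A → ℝ}

lemma sum_mul_const (hw : IsPmf w) (c : ℝ) : ∑ a, w a * c = c := by
  rw [← Finset.sum_mul, hw.2, one_mul]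

lemma sum_mul_le_add_mul (hw : IsPmf w) {f g : A → ℝ} {c k : ℝ}
    (h : ∀ a, f a ≤ c + k * g a) : ∑ a, w a * f a ≤ c + k * ∑ a, w a * g a := by
  calc ∑ a, w a * f a ≤ ∑ a, w a * (c + k * g a) :=
        Finset.sum_le_sum fun a _ => mul_le_mul_of_nonneg_left (h a) (hw.1 a)
    _ = c + k * ∑ a, w a * g a := by
        simp only [mul_add, Finset.sum_add_distrib, hw.sum_mul_const, Finset.mul_sum,
          mul_left_comm k]

lemma sum_mul_le (hw : IsPmf w) {f : A → ℝ} {c : ℝ} (h : ∀ a, f a ≤ c) :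
    ∑ a, w a * f a ≤ c :=
  (Finset.sum_le_sum fun a _ => mul_le_mul_of_nonneg_left (h a) (hw.1 a)).trans_eq
    (hw.sum_mul_const c)

lemma abs_sum_mul_le (hw : IsPmf w) (f : A → ℝ) : |∑ a, w a * f a| ≤ ∑ a, w a * |f a| :=
  (Finset.abs_sum_le_sum_abs _ _).trans_eq <|
    Finset.sum_congr rfl fun a _ => by rw [abs_mul, abs_of_nonneg (hw.1 a)]

lemma sum_mul_l1_sub_le (hw : IsPmf w) (ξ : A → Y → ℝ) (m ρ : Y → ℝ) :
    ∑ a, w a * l1 (ξ a - ρ) ≤ ∑ a, w a * l1 (ξ a - m) + l1 (m - ρ) :=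
  calc ∑ a, w a * l1 (ξ a - ρ) ≤ ∑ a, w a * (l1 (ξ a - m) + l1 (m - ρ)) :=
        Finset.sum_le_sum fun a _ => mul_le_mul_of_nonneg_left (l1_sub_le _ _ _) (hw.1 a)
    _ = ∑ a, w a * l1 (ξ a - m) + l1 (m - ρ) := by
        simp only [mul_add, Finset.sum_add_distrib, hw.sum_mul_const]

lemma mix {K : A → Y → ℝ} (hw : IsPmf w) (hK : ∀ a, IsPmf (K a)) :
    IsPmf (fun y => ∑ a, w a * K a y) := by
  refine ⟨fun y => Finset.sum_nonneg fun a _ => mul_nonneg (hw.1 a) ((hK a).1 y), ?_⟩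
  rw [Finset.sum_comm]
  simp only [← Finset.mul_sum, (hK _).2, mul_one, hw.2]

end IsPmf

lemma abs_sum_sub_mul_le {w₁ w₂ f : A → ℝ} {M : ℝ} (hf : ∀ a, |f a| ≤ M) :
    |∑ a, w₁ a * f a - ∑ a, w₂ a * f a| ≤ M * l1 (w₁ - w₂) := by
  rw [← Finset.sum_sub_distrib, l1, Finset.mul_sum]
  refine (Finset.abs_sum_le_sum_abs _ _).trans (Finset.sum_le_sum fun a _ => ?_)
  rw [← sub_mul, abs_mul, mul_comm, Pi.sub_apply]
  exact mul_le_mul_of_nonneg_right (hf a) (abs_nonneg _)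

lemma abs_mix_sub_le {μ₁ μ₂ f₁ f₂ : A → ℝ} {c M : ℝ} (hμ₁ : IsPmf μ₁)
    (hf₂ : ∀ a, |f₂ a| ≤ M) (hf : ∀ a, |f₁ a - f₂ a| ≤ c) :
    |∑ a, μ₁ a * f₁ a - ∑ a, μ₂ a * f₂ a| ≤ c + M * l1 (μ₁ - μ₂) := by
  have hsplit : ∑ a, μ₁ a * f₁ a - ∑ a, μ₂ a * f₂ a
      = ∑ a, μ₁ a * (f₁ a - f₂ a) + (∑ a, μ₁ a * f₂ a - ∑ a, μ₂ a * f₂ a) := by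
    simp only [mul_sub, Finset.sum_sub_distrib]; ring
  rw [hsplit]
  refine (abs_add_le _ _).trans (add_le_add ?_ (abs_sum_sub_mul_le hf₂))
  exact (hμ₁.abs_sum_mul_le _).trans (hμ₁.sum_mul_le hf)

lemma l1_mix_sub_le {μ₁ μ₂ : A → ℝ} {K₁ K₂ : A → Y → ℝ} {c : ℝ} (hμ₁ : IsPmf μ₁)
    (hK₂ : ∀ a, IsPmf (K₂ a)) (hK : ∀ a, l1 (K₁ a - K₂ a) ≤ c) :
    l1 (fun y => ∑ a, μ₁ a * K₁ a y - ∑ a, μ₂ a * K₂ a y) ≤ c + l1 (μ₁ - μ₂) := by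
  have hpt : ∀ y, |∑ a, μ₁ a * K₁ a y - ∑ a, μ₂ a * K₂ a y|
      ≤ ∑ a, μ₁ a * |K₁ a y - K₂ a y| + ∑ a, |μ₁ a - μ₂ a| * K₂ a y := by
    intro y
    have hsplit : ∑ a, μ₁ a * K₁ a y - ∑ a, μ₂ a * K₂ a y
        = ∑ a, μ₁ a * (K₁ a y - K₂ a y) + ∑ a, (μ₁ a - μ₂ a) * K₂ a y := by
      simp only [mul_sub, sub_mul, Finset.sum_sub_distrib]; ring
    rw [hsplit]
    refine (abs_add_le _ _).trans (add_le_add (hμ₁.abs_sum_mul_le _) ?_)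
    refine (Finset.abs_sum_le_sum_abs _ _).trans_eq (Finset.sum_congr rfl fun a _ => ?_)
    rw [abs_mul, abs_of_nonneg ((hK₂ a).1 y)]
  calc l1 (fun y => ∑ a, μ₁ a * K₁ a y - ∑ a, μ₂ a * K₂ a y)
      ≤ ∑ y, (∑ a, μ₁ a * |K₁ a y - K₂ a y| + ∑ a, |μ₁ a - μ₂ a| * K₂ a y) :=
        Finset.sum_le_sum fun y _ => hpt y
    _ = ∑ a, μ₁ a * l1 (K₁ a - K₂ a) + l1 (μ₁ - μ₂) := by
        rw [Finset.sum_add_distrib, Finset.sum_comm,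
          Finset.sum_comm (s := Finset.univ (α := Y))]
        simp only [l1, Pi.sub_apply, ← Finset.mul_sum, (hK₂ _).2, mul_one]
    _ ≤ c + l1 (μ₁ - μ₂) := by gcongr; exact hμ₁.sum_mul_le hK

end Pmf

section Averages

variable {Y : Type*} [Fintype Y] {N : ℕ}

lemma abs_avg_le (hN : 0 < N) {f : Fin N → ℝ} {c : ℝ} (h : ∀ i, |f i| ≤ c) :
    |(1 / N : ℝ) * ∑ i, f i| ≤ c := by
  rw [abs_mul, abs_of_nonneg (by positivity)]
  calc (1 / N : ℝ) * |∑ i, f i| ≤ (1 / N : ℝ) * ∑ _i : Fin N, c := by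
        gcongr
        exact (Finset.abs_sum_le_sum_abs _ _).trans (Finset.sum_le_sum fun i _ => h i)
    _ = c := by simp [hN.ne']

lemma l1_avg_sub_le (hN : 0 < N) {F G : Fin N → Y → ℝ} {c : ℝ}
    (h : ∀ i, l1 (F i - G i) ≤ c) :
    l1 (fun y => (∑ i, F i y) / N - (∑ i, G i y) / N) ≤ c := by
  calc l1 (fun y => (∑ i, F i y) / N - (∑ i, G i y) / N)
      = ∑ y, (1 / N : ℝ) * |∑ i, (F i y - G i y)| := by
        refine Finset.sum_congr rfl fun y _ => ?_
        dsimp only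
        rw [← sub_div, ← Finset.sum_sub_distrib, abs_div, Nat.abs_cast, div_eq_inv_mul,
          ← one_div]
    _ ≤ ∑ y, (1 / N : ℝ) * ∑ i, |F i y - G i y| := by
        gcongr with y; exact Finset.abs_sum_le_sum_abs _ _
    _ = (1 / N : ℝ) * ∑ i, l1 (F i - G i) := by
        rw [← Finset.mul_sum, Finset.sum_comm]; rfl
    _ ≤ c := by
        refine (le_abs_self _).trans (abs_avg_le hN fun i => ?_)
        rw [abs_of_nonneg (l1_nonneg _)]
        exact h i

end Averages

section ProductPmf

variable {ι κ : Type*} [Fintype ι] [Fintype κ]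

def piPmf (q : ι → κ → ℝ) : (ι → κ) → ℝ := fun a => ∏ i, q i (a i)

variable [DecidableEq ι]

lemma sum_piPmf_mul_prod (q f : ι → κ → ℝ) :
    ∑ a, piPmf q a * ∏ i, f i (a i) = ∏ i, ∑ v, q i v * f i v := by
  simp only [piPmf, ← Finset.prod_mul_distrib, Fintype.prod_sum]

lemma isPmf_piPmf {q : ι → κ → ℝ} (hq : ∀ i, IsPmf (q i)) : IsPmf (piPmf q) := by
  refine ⟨fun a => Finset.prod_nonneg fun i _ => (hq i).1 _, ?_⟩
  simpa [(hq _).2] using sum_piPmf_mul_prod q fun _ _ => 1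

variable {q : ι → κ → ℝ}

lemma sum_piPmf_mul_apply (hq : ∀ i, ∑ v, q i v = 1) (i : ι) (F : κ → ℝ) :
    ∑ a, piPmf q a * F (a i) = ∑ v, q i v * F v := by
  have h := sum_piPmf_mul_prod q fun j v => if j = i then F v else 1
  simp only [Finset.prod_ite_eq', Finset.mem_univ, if_true] at h
  rw [h, Finset.prod_eq_single i (fun j _ hj => by simp [hj, hq j]) (by simp)]
  simp

lemma sum_piPmf_mul_apply_mul_apply (hq : ∀ i, ∑ v, q i v = 1) {i j : ι} (hij : i ≠ j)
    (F G : κ → ℝ) :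
    ∑ a, piPmf q a * (F (a i) * G (a j)) = (∑ v, q i v * F v) * ∑ v, q j v * G v := by
  let f : ι → κ → ℝ := fun k v => if k = i then F v else if k = j then G v else 1
  have hf : ∀ k, k ≠ i ∧ k ≠ j → f k = fun _ => 1 := fun k hk => by simp [f, hk.1, hk.2]
  have h := sum_piPmf_mul_prod q f
  rw [Finset.prod_eq_mul i j hij (fun k _ hk => by simp [hf k hk, hq k]) (by simp) (by simp)]
    at h
  simp only [f, if_pos rfl, if_neg hij.symm, if_true] at h
  rw [← h]
  refine Finset.sum_congr rfl fun a _ => ?_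
  rw [Finset.prod_eq_mul i j hij (fun k _ hk => by simp [hk.1, hk.2]) (by simp) (by simp)]
  simp [hij.symm]

lemma sum_piPmf_mul_sum (hq : ∀ i, ∑ v, q i v = 1) (F : ι → κ → ℝ) :
    ∑ a, piPmf q a * ∑ i, F i (a i) = ∑ i, ∑ v, q i v * F i v := by
  simp only [Finset.mul_sum]
  rw [Finset.sum_comm]
  exact Finset.sum_congr rfl fun i _ => sum_piPmf_mul_apply hq i (F i)

lemma sum_piPmf_mul_sq_sum (hq : ∀ i, ∑ v, q i v = 1) (d : ι → κ → ℝ)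
    (hd : ∀ i, ∑ v, q i v * d i v = 0) :
    ∑ a, piPmf q a * (∑ i, d i (a i)) ^ 2 = ∑ i, ∑ v, q i v * d i v ^ 2 := by
  have hcross : ∀ i j, ∑ a, piPmf q a * (d i (a i) * d j (a j))
      = if i = j then ∑ v, q i v * d i v ^ 2 else 0 := by
    intro i j
    split_ifs with hij
    · subst hij; simpa [sq] using sum_piPmf_mul_apply hq i fun v => d i v * d i v
    · rw [sum_piPmf_mul_apply_mul_apply hq hij, hd, zero_mul]
  calc ∑ a, piPmf q a * (∑ i, d i (a i)) ^ 2
      = ∑ i, ∑ j, ∑ a, piPmf q a * (d i (a i) * d j (a j)) := by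
        simp only [sq, Finset.sum_mul_sum]
        simp only [Finset.mul_sum]
        rw [Finset.sum_comm]
        exact Finset.sum_congr rfl fun i _ => Finset.sum_comm
    _ = ∑ i, ∑ v, q i v * d i v ^ 2 := by
        simp only [hcross, Finset.sum_ite_eq, Finset.mem_univ, if_true]

end ProductPmf

section Sampling

lemma IsPmf.sum_mul_abs_le_sqrt {A : Type*} [Fintype A] {w : A → ℝ} (hw : IsPmf w)
    (z : A → ℝ) : ∑ a, w a * |z a| ≤ √(∑ a, w a * z a ^ 2) := by
  have h := Real.sum_sqrt_mul_sqrt_le Finset.univ hw.1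
    fun a => mul_nonneg (hw.1 a) (sq_nonneg (z a))
  rw [hw.2, Real.sqrt_one, one_mul] at h
  refine le_of_eq_of_le (Finset.sum_congr rfl fun a _ => ?_) h
  rw [Real.sqrt_mul (hw.1 a), Real.sqrt_sq_eq_abs, ← mul_assoc, Real.mul_self_sqrt (hw.1 a)]

lemma sum_sqrt_le_sqrt_card_mul_sqrt_sum {Y : Type*} [Fintype Y] {m : Y → ℝ}
    (hm : ∀ y, 0 ≤ m y) : ∑ y, √(m y) ≤ √(Fintype.card Y) * √(∑ y, m y) := by
  simpa using Real.sum_sqrt_mul_sqrt_le Finset.univ (fun _ => zero_le_one) hm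

variable {ι κ Y : Type*} [Fintype ι] [DecidableEq ι] [Fintype κ] [Fintype Y]

lemma sum_piPmf_mul_sq_sum_sub_le {q : ι → κ → ℝ} (hq : ∀ i, IsPmf (q i)) {f : ι → κ → ℝ}
    (hf₀ : ∀ i v, 0 ≤ f i v) (hf₁ : ∀ i v, f i v ≤ 1) :
    ∑ a, piPmf q a * (∑ i, (f i (a i) - ∑ v, q i v * f i v)) ^ 2
      ≤ ∑ i, ∑ v, q i v * f i v := by
  have hmean : ∀ i, ∑ v, q i v * (f i v - ∑ v', q i v' * f i v') = 0 := fun i => by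
    rw [Finset.sum_congr rfl fun v _ => mul_sub _ _ _, Finset.sum_sub_distrib,
      (hq i).sum_mul_const, sub_self]
  rw [sum_piPmf_mul_sq_sum (fun i => (hq i).2) _ hmean]
  refine Finset.sum_le_sum fun i _ => ?_
  set p := ∑ v, q i v * f i v
  have hp : 0 ≤ p := Finset.sum_nonneg fun v _ => mul_nonneg ((hq i).1 v) (hf₀ i v)
  calc ∑ v, q i v * (f i v - p) ^ 2
      = ∑ v, q i v * f i v * (f i v - p) - p * ∑ v, q i v * (f i v - p) := by
        rw [Finset.mul_sum, ← Finset.sum_sub_distrib]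
        exact Finset.sum_congr rfl fun v _ => by ring
    _ = ∑ v, q i v * f i v * (f i v - p) := by rw [hmean, mul_zero, sub_zero]
    _ ≤ p := Finset.sum_le_sum fun v _ =>
        mul_le_of_le_one_right (mul_nonneg ((hq i).1 v) (hf₀ i v)) (by linarith [hf₁ i v])

/- For each `y` the variance of the average is at most `m y / N ^ 2`, since `0 ≤ g ≤ 1`;
Cauchy–Schwarz in `a` and then in `y` turns this into `√|Y| / √N`. -/
lemma sum_piPmf_mul_l1_avg_sub_le {N : ℕ} (hN : 0 < N) {q : Fin N → κ → ℝ}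
    (hq : ∀ i, IsPmf (q i)) {g : Fin N → κ → Y → ℝ} (hg : ∀ i v, IsPmf (g i v)) :
    ∑ a, piPmf q a *
        l1 (fun y => (∑ i, g i (a i) y) / N - (∑ i, ∑ v, q i v * g i v y) / N)
      ≤ √(Fintype.card Y) / √N := by
  set m : Y → ℝ := fun y => ∑ i, ∑ v, q i v * g i v y
  have hm₀ : ∀ y, 0 ≤ m y := fun y => Finset.sum_nonneg fun i _ =>
    Finset.sum_nonneg fun v _ => mul_nonneg ((hq i).1 v) ((hg i v).1 y)
  have hm : ∑ y, m y = N := by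
    rw [Finset.sum_comm]
    simp [Finset.sum_comm (γ := Y), ← Finset.mul_sum, (hg _ _).2, (hq _).2]
  have hvar : ∀ y, ∑ a, piPmf q a * ((∑ i, g i (a i) y) / N - m y / N) ^ 2 ≤ m y / N ^ 2 := by
    intro y
    have hle : ∀ i v, g i v y ≤ 1 := fun i v =>
      (hg i v).2 ▸ Finset.single_le_sum (fun y' _ => (hg i v).1 y') (Finset.mem_univ y)
    calc ∑ a, piPmf q a * ((∑ i, g i (a i) y) / N - m y / N) ^ 2
        = (∑ a, piPmf q a * (∑ i, (g i (a i) y - ∑ v, q i v * g i v y)) ^ 2) / N ^ 2 := by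
          have hZ : ∀ a : Fin N → κ, (∑ i, g i (a i) y) / N - m y / N
              = (∑ i, (g i (a i) y - ∑ v, q i v * g i v y)) / N := fun a => by
            rw [Finset.sum_sub_distrib, sub_div]
          simp only [hZ, div_pow, ← mul_div_assoc, ← Finset.sum_div]
      _ ≤ m y / N ^ 2 := by
          gcongr
          exact sum_piPmf_mul_sq_sum_sub_le (f := fun i v => g i v y) hq
            (fun i v => (hg i v).1 y) hle
  have hNpos : (0 : ℝ) < N := Nat.cast_pos.mpr hN
  calc ∑ a, piPmf q a * l1 (fun y => (∑ i, g i (a i) y) / N - m y / N)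
      = ∑ y, ∑ a, piPmf q a * |(∑ i, g i (a i) y) / N - m y / N| := by
        simp only [l1, Finset.mul_sum]
        exact Finset.sum_comm
    _ ≤ ∑ y, √(m y / N ^ 2) := Finset.sum_le_sum fun y _ =>
        ((isPmf_piPmf hq).sum_mul_abs_le_sqrt _).trans (Real.sqrt_le_sqrt (hvar y))
    _ = (∑ y, √(m y)) / N := by
        simp only [Real.sqrt_div' _ (sq_nonneg _), Real.sqrt_sq hNpos.le, Finset.sum_div]
    _ ≤ √(Fintype.card Y) * √N / N := by
        gcongr
        exact hm ▸ sum_sqrt_le_sqrt_card_mul_sqrt_sum hm₀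
    _ = √(Fintype.card Y) / √N := by
        rw [mul_div_assoc, Real.sqrt_div_self', mul_one_div]

lemma sum_piPmf_mul_l1_emp_sub_le [DecidableEq κ] {N : ℕ} (hN : 0 < N)
    {q : Fin N → κ → ℝ} (hq : ∀ i, IsPmf (q i)) :
    ∑ a, piPmf q a * l1 (fun v => emp a v - (∑ i, q i v) / N)
      ≤ √(Fintype.card κ) / √N := by
  have hδ : ∀ (i : Fin N) (v : κ), IsPmf fun v' => if v = v' then (1 : ℝ) else 0 :=
    fun _ v => ⟨fun v' => by positivity, by simp⟩
  convert sum_piPmf_mul_l1_avg_sub_le hN hq hδ using 5 with a - v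
  simp [emp]

end Sampling

section Model

variable {X U : Type*} [Fintype X] [Fintype U]

structure IsAdmissiblePolicy (L : ℝ) (π : X → (X → ℝ) → U → ℝ) : Prop where
  isPmf : ∀ x μ, IsPmf μ → IsPmf (π x μ)
  lipschitz : ∀ x μ₁ μ₂, IsPmf μ₁ → IsPmf μ₂ → l1 (π x μ₁ - π x μ₂) ≤ L * l1 (μ₁ - μ₂)

structure IsLipschitzKernel (L : ℝ) (P : X → U → (X → ℝ) → (U → ℝ) → X → ℝ) : Prop where
  isPmf : ∀ x u μ ν, IsPmf μ → IsPmf ν → IsPmf (P x u μ ν)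
  lipschitz : ∀ x u μ₁ μ₂ ν₁ ν₂, IsPmf μ₁ → IsPmf μ₂ → IsPmf ν₁ → IsPmf ν₂ →
    l1 (P x u μ₁ ν₁ - P x u μ₂ ν₂) ≤ L * (l1 (μ₁ - μ₂) + l1 (ν₁ - ν₂))

structure IsBoundedLipschitzReward (M L : ℝ) (r : X → U → (X → ℝ) → (U → ℝ) → ℝ) : Prop where
  abs_le : ∀ x u μ ν, IsPmf μ → IsPmf ν → |r x u μ ν| ≤ M
  lipschitz : ∀ x u μ₁ μ₂ ν₁ ν₂, IsPmf μ₁ → IsPmf μ₂ → IsPmf ν₁ → IsPmf ν₂ →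
    |r x u μ₁ ν₁ - r x u μ₂ ν₂| ≤ L * (l1 (μ₁ - μ₂) + l1 (ν₁ - ν₂))

variable {μ : X → ℝ} {π : X → (X → ℝ) → U → ℝ}

lemma nuMF_eq_sum (μ : X → ℝ) (π : X → (X → ℝ) → U → ℝ) (u : U) :
    nuMF μ π u = ∑ x, μ x * π x μ u :=
  Finset.sum_congr rfl fun _ _ => mul_comm _ _

lemma PMF'_eq_sum (P : X → U → (X → ℝ) → (U → ℝ) → X → ℝ) (μ : X → ℝ)
    (π : X → (X → ℝ) → U → ℝ) (y : X) :
    PMF' P μ π y = ∑ x, μ x * ∑ u, π x μ u * P x u μ (nuMF μ π) y := by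
  simp only [PMF', Finset.mul_sum]
  exact Finset.sum_congr rfl fun _ _ => Finset.sum_congr rfl fun _ _ => by ring

lemma rMF_eq_sum (r : X → U → (X → ℝ) → (U → ℝ) → ℝ) (μ : X → ℝ)
    (π : X → (X → ℝ) → U → ℝ) :
    rMF r μ π = ∑ x, μ x * ∑ u, π x μ u * r x u μ (nuMF μ π) := by
  simp only [rMF, Finset.mul_sum]
  exact Finset.sum_congr rfl fun _ _ => Finset.sum_congr rfl fun _ _ => by ring

lemma isPmf_nuMF (hμ : IsPmf μ) (hπ : ∀ x, IsPmf (π x μ)) : IsPmf (nuMF μ π) := by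
  simpa only [← nuMF_eq_sum] using hμ.mix hπ

lemma isPmf_PMF' {P : X → U → (X → ℝ) → (U → ℝ) → X → ℝ} (hμ : IsPmf μ)
    (hπ : ∀ x, IsPmf (π x μ)) (hP : ∀ x u, IsPmf (P x u μ (nuMF μ π))) :
    IsPmf (PMF' P μ π) := by
  simpa only [← PMF'_eq_sum] using hμ.mix fun x => (hπ x).mix (hP x)

lemma abs_rMF_le {M : ℝ} {r : X → U → (X → ℝ) → (U → ℝ) → ℝ}
    (hr : ∀ x u μ ν, IsPmf μ → IsPmf ν → |r x u μ ν| ≤ M) (hμ : IsPmf μ)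
    (hπ : ∀ x, IsPmf (π x μ)) : |rMF r μ π| ≤ M := by
  have hν := isPmf_nuMF hμ hπ
  rw [rMF_eq_sum]
  refine (hμ.abs_sum_mul_le _).trans (hμ.sum_mul_le fun x => ?_)
  exact ((hπ x).abs_sum_mul_le _).trans ((hπ x).sum_mul_le fun u => hr x u μ _ hμ hν)

lemma isPmf_muFlow {P : X → U → (X → ℝ) → (U → ℝ) → X → ℝ} {π : ℕ → X → (X → ℝ) → U → ℝ}
    {μ₀ : X → ℝ} (hμ₀ : IsPmf μ₀) (hP : ∀ x u μ ν, IsPmf μ → IsPmf ν → IsPmf (P x u μ ν))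
    (hπ : ∀ t x μ, IsPmf μ → IsPmf (π t x μ)) (t : ℕ) : IsPmf (muFlow P π μ₀ t) := by
  induction t with
  | zero => exact hμ₀
  | succ t ih =>
    have hν := isPmf_nuMF ih fun x => hπ t x _ ih
    exact isPmf_PMF' ih (fun x => hπ t x _ ih) fun x u => hP x u _ _ ih hν

lemma rMF_congr {r : X → U → (X → ℝ) → (U → ℝ) → ℝ} {π₁ π₂ : X → (X → ℝ) → U → ℝ}
    (h : ∀ x, π₁ x μ = π₂ x μ) : rMF r μ π₁ = rMF r μ π₂ := by
  have hν : nuMF μ π₁ = nuMF μ π₂ := funext fun u => by simp only [nuMF, h]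
  simp only [rMF, hν, h]

lemma vMF_congr {γ : ℝ} {r : X → U → (X → ℝ) → (U → ℝ) → ℝ}
    {P : X → U → (X → ℝ) → (U → ℝ) → X → ℝ} {π₁ π₂ : ℕ → X → (X → ℝ) → U → ℝ} {μ₀ : X → ℝ}
    (hflow : ∀ t, muFlow P π₁ μ₀ t = muFlow P π₂ μ₀ t)
    (hagree : ∀ t x, π₁ t x (muFlow P π₂ μ₀ t) = π₂ t x (muFlow P π₂ μ₀ t)) :
    vMF γ r P π₁ μ₀ = vMF γ r P π₂ μ₀ :=
  tsum_congr fun t => by rw [hflow t, rMF_congr (hagree t)]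

variable [DecidableEq X] {N : ℕ}

lemma isPmf_emp (hN : 0 < N) (s : Fin N → X) : IsPmf (emp s) := by
  refine ⟨fun x => by unfold emp; positivity, ?_⟩
  simp only [emp, ← Finset.sum_div]
  rw [Finset.sum_comm]
  simp [hN.ne']

lemma sum_emp_mul (s : Fin N → X) (h : X → ℝ) :
    ∑ x, emp s x * h x = (∑ i, h (s i)) / N := by
  simp only [emp, div_mul_eq_mul_div, ← Finset.sum_div, Finset.sum_mul, ite_mul, one_mul,
    zero_mul]
  rw [Finset.sum_comm]
  simp

end Model

section JointLaws

variable {X U : Type*} [Fintype X] [Fintype U] [DecidableEq X] {N : ℕ}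

noncomputable def actionLaw (π : X → (X → ℝ) → U → ℝ) (s : Fin N → X) : (Fin N → U) → ℝ :=
  piPmf fun i => π (s i) (emp s)

noncomputable def stateLaw [DecidableEq U] (P : X → U → (X → ℝ) → (U → ℝ) → X → ℝ)
    (s : Fin N → X) (a : Fin N → U) : (Fin N → X) → ℝ :=
  piPmf fun i => P (s i) (a i) (emp s) (emp a)

variable {μ : X → ℝ} {π : X → (X → ℝ) → U → ℝ} {P : X → U → (X → ℝ) → (U → ℝ) → X → ℝ}
  {L_Q : ℝ}

lemma isPmf_actionLaw (hN : 0 < N) (hπ : ∀ x μ, IsPmf μ → IsPmf (π x μ)) (s : Fin N → X) :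
    IsPmf (actionLaw π s) :=
  isPmf_piPmf fun _ => hπ _ _ (isPmf_emp hN s)

lemma isPmf_stateLaw [DecidableEq U] (hN : 0 < N)
    (hP : ∀ x u μ ν, IsPmf μ → IsPmf ν → IsPmf (P x u μ ν)) (s : Fin N → X) (a : Fin N → U) :
    IsPmf (stateLaw P s a) :=
  isPmf_piPmf fun _ => hP _ _ _ _ (isPmf_emp hN s) (isPmf_emp hN a)

lemma l1_avg_policy_sub_nuMF_le (hN : 0 < N) (hπ : IsAdmissiblePolicy L_Q π) (hμ : IsPmf μ)
    (s : Fin N → X) :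
    l1 (fun u => (∑ i, π (s i) (emp s) u) / N - nuMF μ π u) ≤ (1 + L_Q) * l1 (emp s - μ) := by
  have hs := isPmf_emp hN s
  calc l1 (fun u => (∑ i, π (s i) (emp s) u) / N - nuMF μ π u)
      = l1 (fun u => ∑ x, emp s x * π x (emp s) u - ∑ x, μ x * π x μ u) := by
        simp only [sum_emp_mul s fun x => π x (emp s) _, nuMF_eq_sum]
    _ ≤ L_Q * l1 (emp s - μ) + l1 (emp s - μ) :=
        l1_mix_sub_le hs (fun x => hπ.isPmf x μ hμ) fun x => hπ.lipschitz x _ _ hs hμ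
    _ = (1 + L_Q) * l1 (emp s - μ) := by ring

lemma sum_actionLaw_mul_l1_emp_sub_nuMF_le [DecidableEq U] (hN : 0 < N)
    (hπ : IsAdmissiblePolicy L_Q π) (hμ : IsPmf μ) (s : Fin N → X) :
    ∑ a, actionLaw π s a * l1 (emp a - nuMF μ π)
      ≤ √(Fintype.card U) / √N + (1 + L_Q) * l1 (emp s - μ) := by
  have hq : ∀ i, IsPmf (π (s i) (emp s)) := fun i => hπ.isPmf _ _ (isPmf_emp hN s)
  exact ((isPmf_actionLaw hN hπ.isPmf s).sum_mul_l1_sub_le (fun a => emp a)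
    (fun u => (∑ i, π (s i) (emp s) u) / N) _).trans
    (add_le_add (sum_piPmf_mul_l1_emp_sub_le hN hq) (l1_avg_policy_sub_nuMF_le hN hπ hμ s))

end JointLaws

section RewardStep

variable {X U : Type*} [Fintype X] [Fintype U] [DecidableEq X] {N : ℕ}
  {μ : X → ℝ} {π : X → (X → ℝ) → U → ℝ} {L_Q : ℝ}

noncomputable def expectedReward [DecidableEq U] (r : X → U → (X → ℝ) → (U → ℝ) → ℝ)
    (π : X → (X → ℝ) → U → ℝ) (s : Fin N → X) : ℝ :=
  ∑ a, actionLaw π s a * ((1 / N : ℝ) * ∑ i, r (s i) (a i) (emp s) (emp a))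

lemma abs_sum_actionLaw_mul_avg_sub_rMF_le {M L_R : ℝ} {r : X → U → (X → ℝ) → (U → ℝ) → ℝ}
    (hN : 0 < N) (hM : 0 ≤ M) (hπ : IsAdmissiblePolicy L_Q π)
    (hr : IsBoundedLipschitzReward M L_R r) (hμ : IsPmf μ) (s : Fin N → X) :
    |∑ a, actionLaw π s a * ((1 / N : ℝ) * ∑ i, r (s i) (a i) μ (nuMF μ π)) - rMF r μ π|
      ≤ M * (L_Q * l1 (emp s - μ)) + M * l1 (emp s - μ) := by
  have hs := isPmf_emp hN s
  have hν := isPmf_nuMF hμ fun x => hπ.isPmf x μ hμ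
  have hexp : ∑ a, actionLaw π s a * ((1 / N : ℝ) * ∑ i, r (s i) (a i) μ (nuMF μ π))
      = ∑ x, emp s x * ∑ u, π x (emp s) u * r x u μ (nuMF μ π) := by
    simp only [mul_left_comm _ (1 / N : ℝ), ← Finset.mul_sum,
      sum_emp_mul s fun x => ∑ u, π x (emp s) u * r x u μ (nuMF μ π)]
    rw [actionLaw, sum_piPmf_mul_sum (fun i => (hπ.isPmf _ _ hs).2)
      (fun i u => r (s i) u μ (nuMF μ π)), one_div_mul_eq_div]
  rw [hexp, rMF_eq_sum]
  refine abs_mix_sub_le hs (fun x => ?_) fun x => ?_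
  · exact ((hπ.isPmf x μ hμ).abs_sum_mul_le _).trans
      ((hπ.isPmf x μ hμ).sum_mul_le fun u => hr.abs_le x u μ _ hμ hν)
  · exact (abs_sum_sub_mul_le fun u => hr.abs_le x u μ _ hμ hν).trans
      (mul_le_mul_of_nonneg_left (hπ.lipschitz x _ _ hs hμ) hM)

lemma abs_expectedReward_sub_rMF_le [DecidableEq U] {M L_R : ℝ}
    {r : X → U → (X → ℝ) → (U → ℝ) → ℝ} (hN : 0 < N) (hM : 0 ≤ M) (hL_R : 0 ≤ L_R) (hπ : IsAdmissiblePolicy L_Q π)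
    (hr : IsBoundedLipschitzReward M L_R r) (hμ : IsPmf μ) (s : Fin N → X) :
    |expectedReward r π s - rMF r μ π|
      ≤ L_R * (√(Fintype.card U) / √N)
        + ((M + 2 * L_R) + L_Q * (M + L_R)) * l1 (emp s - μ) := by
  have hs := isPmf_emp hN s
  have hν := isPmf_nuMF hμ fun x => hπ.isPmf x μ hμ
  have hw := isPmf_actionLaw hN hπ.isPmf s
  have hlip : ∀ a, |(1 / N : ℝ) * ∑ i, r (s i) (a i) (emp s) (emp a)
      - (1 / N : ℝ) * ∑ i, r (s i) (a i) μ (nuMF μ π)|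
      ≤ L_R * l1 (emp s - μ) + L_R * l1 (emp a - nuMF μ π) := fun a => by
    rw [← mul_sub, ← Finset.sum_sub_distrib, ← mul_add]
    exact abs_avg_le hN fun i => hr.lipschitz _ _ _ _ _ _ hs hμ (isPmf_emp hN a) hν
  have hemp : |expectedReward r π s
      - ∑ a, actionLaw π s a * ((1 / N : ℝ) * ∑ i, r (s i) (a i) μ (nuMF μ π))|
      ≤ L_R * l1 (emp s - μ) + L_R * ∑ a, actionLaw π s a * l1 (emp a - nuMF μ π) := by
    rw [expectedReward, ← Finset.sum_sub_distrib,
      Finset.sum_congr rfl fun a _ => (mul_sub (actionLaw π s a) _ _).symm]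
    exact (hw.abs_sum_mul_le _).trans (hw.sum_mul_le_add_mul hlip)
  have hmf := abs_sum_actionLaw_mul_avg_sub_rMF_le hN hM hπ hr hμ s
  have hact := mul_le_mul_of_nonneg_left
    (sum_actionLaw_mul_l1_emp_sub_nuMF_le hN hπ hμ s) hL_R
  linarith [abs_sub_le (expectedReward r π s)
    (∑ a, actionLaw π s a * ((1 / N : ℝ) * ∑ i, r (s i) (a i) μ (nuMF μ π))) (rMF r μ π)]

end RewardStep

section StateStep

variable {X U : Type*} [Fintype X] [Fintype U] [DecidableEq X] {N : ℕ}
  {μ : X → ℝ} {π : X → (X → ℝ) → U → ℝ} {P : X → U → (X → ℝ) → (U → ℝ) → X → ℝ} {L_Q : ℝ}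

lemma l1_avg_transition_sub_PMF'_le (hN : 0 < N) (hπ : IsAdmissiblePolicy L_Q π)
    (hP : ∀ x u, IsPmf (P x u μ (nuMF μ π))) (hμ : IsPmf μ) (s : Fin N → X) :
    l1 (fun y => (∑ i, ∑ u, π (s i) (emp s) u * P (s i) u μ (nuMF μ π) y) / N - PMF' P μ π y)
      ≤ (1 + L_Q) * l1 (emp s - μ) := by
  have hs := isPmf_emp hN s
  calc l1 (fun y => (∑ i, ∑ u, π (s i) (emp s) u * P (s i) u μ (nuMF μ π) y) / N
        - PMF' P μ π y)
      = l1 (fun y => ∑ x, emp s x * ∑ u, π x (emp s) u * P x u μ (nuMF μ π) y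
          - ∑ x, μ x * ∑ u, π x μ u * P x u μ (nuMF μ π) y) := by
        simp only [sum_emp_mul s fun x => ∑ u, π x (emp s) u * P x u μ (nuMF μ π) _,
          PMF'_eq_sum]
    _ ≤ L_Q * l1 (emp s - μ) + l1 (emp s - μ) := by
        refine l1_mix_sub_le hs (fun x => (hπ.isPmf x μ hμ).mix (hP x)) fun x => ?_
        refine (l1_mix_sub_le (c := 0) (hπ.isPmf x _ hs) (hP x) fun u => ?_).trans ?_
        · simp [l1]
        · simpa using hπ.lipschitz x _ _ hs hμ
    _ = (1 + L_Q) * l1 (emp s - μ) := by ring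

variable [DecidableEq U]

lemma sum_stateLaw_mul_l1_emp_sub_le {L_P : ℝ} {ν : U → ℝ} (hN : 0 < N)
    (hP : IsLipschitzKernel L_P P) (hμ : IsPmf μ) (hν : IsPmf ν) (s : Fin N → X)
    (a : Fin N → U) (ρ : X → ℝ) :
    ∑ s', stateLaw P s a s' * l1 (emp s' - ρ)
      ≤ √(Fintype.card X) / √N + L_P * (l1 (emp s - μ) + l1 (emp a - ν))
        + l1 (fun y => (∑ i, P (s i) (a i) μ ν y) / N - ρ y) := by
  have hs := isPmf_emp hN s
  have ha := isPmf_emp hN a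
  -- `m₁` is the conditional mean of `emp s'` given `a`, `m₂` the same at the mean-field `μ, ν`
  set m₁ : X → ℝ := fun y => (∑ i, P (s i) (a i) (emp s) (emp a) y) / N
  set m₂ : X → ℝ := fun y => (∑ i, P (s i) (a i) μ ν y) / N
  have hsample : ∑ s', stateLaw P s a s' * l1 (emp s' - m₁) ≤ √(Fintype.card X) / √N :=
    sum_piPmf_mul_l1_emp_sub_le hN fun i => hP.isPmf _ _ _ _ hs ha
  have hlip : l1 (m₁ - m₂) ≤ L_P * (l1 (emp s - μ) + l1 (emp a - ν)) :=
    l1_avg_sub_le hN fun i => hP.lipschitz _ _ _ _ _ _ hs hμ ha hν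
  have htri : l1 (m₁ - ρ) ≤ l1 (m₁ - m₂) + l1 (fun y => m₂ y - ρ y) := l1_sub_le m₁ m₂ ρ
  linarith [(isPmf_stateLaw hN hP.isPmf s a).sum_mul_l1_sub_le (fun s' => emp s') m₁ ρ]

lemma sum_actionLaw_mul_sum_stateLaw_mul_l1_le {L_P : ℝ} (hN : 0 < N) (hL_P : 0 ≤ L_P)
    (hπ : IsAdmissiblePolicy L_Q π) (hP : IsLipschitzKernel L_P P) (hμ : IsPmf μ)
    (s : Fin N → X) :
    ∑ a, actionLaw π s a * ∑ s', stateLaw P s a s' * l1 (emp s' - PMF' P μ π)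
      ≤ (2 * √(Fintype.card X) + L_P * √(Fintype.card U)) / √N
        + ((1 + 2 * L_P) + L_Q * (1 + L_P)) * l1 (emp s - μ) := by
  set ν := nuMF μ π
  have hs := isPmf_emp hN s
  have hν : IsPmf ν := isPmf_nuMF hμ fun x => hπ.isPmf x μ hμ
  have hw := isPmf_actionLaw hN hπ.isPmf s
  set m : X → ℝ := fun y => (∑ i, ∑ u, π (s i) (emp s) u * P (s i) u μ ν y) / N
  have hm₂ : ∑ a, actionLaw π s a * l1 (fun y => (∑ i, P (s i) (a i) μ ν y) / N - m y)
      ≤ √(Fintype.card X) / √N :=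
    sum_piPmf_mul_l1_avg_sub_le (q := fun i => π (s i) (emp s))
      (g := fun i u => P (s i) u μ ν) hN (fun i => hπ.isPmf _ _ hs) fun i u =>
        hP.isPmf _ _ _ _ hμ hν
  have hm : l1 (m - PMF' P μ π) ≤ (1 + L_Q) * l1 (emp s - μ) :=
    l1_avg_transition_sub_PMF'_le hN hπ (fun x u => hP.isPmf x u _ _ hμ hν) hμ s
  have hmean : ∑ a, actionLaw π s a
        * l1 (fun y => (∑ i, P (s i) (a i) μ ν y) / N - PMF' P μ π y)
      ≤ √(Fintype.card X) / √N + (1 + L_Q) * l1 (emp s - μ) :=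
    (hw.sum_mul_l1_sub_le (fun a y => (∑ i, P (s i) (a i) μ ν y) / N) m _).trans
      (add_le_add hm₂ hm)
  have hact : ∑ a, actionLaw π s a * l1 (emp a - ν)
      ≤ √(Fintype.card U) / √N + (1 + L_Q) * l1 (emp s - μ) :=
    sum_actionLaw_mul_l1_emp_sub_nuMF_le hN hπ hμ s
  have htotal := hw.sum_mul_le_add_mul (k := 1)
    (f := fun a => ∑ s', stateLaw P s a s' * l1 (emp s' - PMF' P μ π))
    (c := √(Fintype.card X) / √N + L_P * l1 (emp s - μ))
    (g := fun a => L_P * l1 (emp a - ν)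
      + l1 (fun y => (∑ i, P (s i) (a i) μ ν y) / N - PMF' P μ π y)) fun a => by
      linarith [sum_stateLaw_mul_l1_emp_sub_le hN hP hμ hν s a (PMF' P μ π)]
  simp only [one_mul, mul_add, Finset.sum_add_distrib, mul_left_comm _ L_P,
    ← Finset.mul_sum] at htotal
  have hconst : (2 * √(Fintype.card X) + L_P * √(Fintype.card U)) / √N
      = 2 * (√(Fintype.card X) / √N) + L_P * (√(Fintype.card U) / √N) := by ring
  linarith [mul_le_mul_of_nonneg_left hact hL_P]

end StateStep

section NAgentChain

variable {X U : Type*} [Fintype X] [Fintype U] [DecidableEq X] [DecidableEq U] {N : ℕ}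
  {P : X → U → (X → ℝ) → (U → ℝ) → X → ℝ} {π : ℕ → X → (X → ℝ) → U → ℝ}

lemma sum_Wproc_succ_mul (P : X → U → (X → ℝ) → (U → ℝ) → X → ℝ)
    (π : ℕ → X → (X → ℝ) → U → ℝ) (x₀ : Fin N → X) (t : ℕ) (f : (Fin N → X) → ℝ) :
    ∑ s', Wproc P π x₀ (t + 1) s' * f s'
      = ∑ s, Wproc P π x₀ t s * ∑ a, actionLaw (π t) s a * ∑ s', stateLaw P s a s' * f s' := by
  simp only [Wproc, Finset.sum_mul, Finset.mul_sum, mul_assoc]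
  rw [Finset.sum_comm]
  exact Finset.sum_congr rfl fun s _ => Finset.sum_comm

lemma isPmf_Wproc (hN : 0 < N) (hP : ∀ x u μ ν, IsPmf μ → IsPmf ν → IsPmf (P x u μ ν))
    (hπ : ∀ t x μ, IsPmf μ → IsPmf (π t x μ)) (x₀ : Fin N → X) (t : ℕ) :
    IsPmf (Wproc P π x₀ t) := by
  induction t with
  | zero => exact ⟨fun s => by simp only [Wproc]; positivity, by simp [Wproc]⟩
  | succ t ih =>
    exact ih.mix fun s => (isPmf_actionLaw hN (hπ t) s).mix (isPmf_stateLaw hN hP s)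

lemma sum_Wproc_succ_mul_l1_le {L_P L_Q : ℝ} {μ : X → ℝ} (hN : 0 < N) (hL_P : 0 ≤ L_P)
    (hP : IsLipschitzKernel L_P P) (hπ : ∀ t, IsAdmissiblePolicy L_Q (π t)) (hμ : IsPmf μ)
    (x₀ : Fin N → X) (t : ℕ) :
    ∑ s, Wproc P π x₀ (t + 1) s * l1 (emp s - PMF' P μ (π t))
      ≤ (2 * √(Fintype.card X) + L_P * √(Fintype.card U)) / √N
        + ((1 + 2 * L_P) + L_Q * (1 + L_P)) * ∑ s, Wproc P π x₀ t s * l1 (emp s - μ) := by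
  rw [sum_Wproc_succ_mul]
  exact (isPmf_Wproc hN hP.isPmf (fun t => (hπ t).isPmf) x₀ t).sum_mul_le_add_mul fun s =>
    sum_actionLaw_mul_sum_stateLaw_mul_l1_le hN hL_P (hπ t) hP hμ s

lemma abs_expectedReward_le {M : ℝ} {r : X → U → (X → ℝ) → (U → ℝ) → ℝ}
    {π : X → (X → ℝ) → U → ℝ} (hN : 0 < N) (hπ : ∀ x μ, IsPmf μ → IsPmf (π x μ))
    (hr : ∀ x u μ ν, IsPmf μ → IsPmf ν → |r x u μ ν| ≤ M) (s : Fin N → X) :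
    |expectedReward r π s| ≤ M :=
  ((isPmf_actionLaw hN hπ s).abs_sum_mul_le _).trans <| (isPmf_actionLaw hN hπ s).sum_mul_le
    fun a => abs_avg_le hN fun _ => hr _ _ _ _ (isPmf_emp hN s) (isPmf_emp hN a)

lemma abs_sum_Wproc_mul_expectedReward_le {M : ℝ} {r : X → U → (X → ℝ) → (U → ℝ) → ℝ}
    (hN : 0 < N) (hr : ∀ x u μ ν, IsPmf μ → IsPmf ν → |r x u μ ν| ≤ M)
    (hP : ∀ x u μ ν, IsPmf μ → IsPmf ν → IsPmf (P x u μ ν))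
    (hπ : ∀ t x μ, IsPmf μ → IsPmf (π t x μ)) (x₀ : Fin N → X) (t : ℕ) :
    |∑ s, Wproc P π x₀ t s * expectedReward r (π t) s| ≤ M :=
  have hW := isPmf_Wproc hN hP hπ x₀ t
  (hW.abs_sum_mul_le _).trans (hW.sum_mul_le fun s => abs_expectedReward_le hN (hπ t) hr s)

lemma abs_sum_Wproc_mul_expectedReward_sub_rMF_le {M L_R L_Q : ℝ}
    {r : X → U → (X → ℝ) → (U → ℝ) → ℝ} {μ : X → ℝ} (hN : 0 < N) (hM : 0 ≤ M) (hL_R : 0 ≤ L_R)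
    (hP : ∀ x u μ ν, IsPmf μ → IsPmf ν → IsPmf (P x u μ ν))
    (hπ : ∀ t, IsAdmissiblePolicy L_Q (π t)) (hr : IsBoundedLipschitzReward M L_R r)
    (hμ : IsPmf μ) (x₀ : Fin N → X) (t : ℕ) :
    |∑ s, Wproc P π x₀ t s * expectedReward r (π t) s - rMF r μ (π t)|
      ≤ L_R * (√(Fintype.card U) / √N)
        + ((M + 2 * L_R) + L_Q * (M + L_R)) * ∑ s, Wproc P π x₀ t s * l1 (emp s - μ) := by
  have hW := isPmf_Wproc hN hP (fun t => (hπ t).isPmf) x₀ t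
  rw [← hW.sum_mul_const (rMF r μ (π t)), ← Finset.sum_sub_distrib]
  simp only [← mul_sub]
  exact (hW.abs_sum_mul_le _).trans (hW.sum_mul_le_add_mul fun s =>
    abs_expectedReward_sub_rMF_le hN hM hL_R (hπ t) hr hμ s)

lemma vMARL_eq_tsum (γ : ℝ) (r : X → U → (X → ℝ) → (U → ℝ) → ℝ)
    (P : X → U → (X → ℝ) → (U → ℝ) → X → ℝ) (π : ℕ → X → (X → ℝ) → U → ℝ) (x₀ : Fin N → X) :
    vMARL γ r P π x₀ = ∑' t, γ ^ t * ∑ s, Wproc P π x₀ t s * expectedReward r (π t) s :=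
  rfl

end NAgentChain

section Discounting

lemma le_mul_geom_sum_of_le_add_mul {e : ℕ → ℝ} {D S : ℝ} (hS : 0 ≤ S) (h₀ : e 0 ≤ 0)
    (h : ∀ t, e (t + 1) ≤ D + S * e t) (t : ℕ) : e t ≤ D * ∑ k ∈ Finset.range t, S ^ k := by
  induction t with
  | zero => simpa using h₀
  | succ t ih =>
    calc e (t + 1) ≤ D + S * e t := h t
      _ ≤ D + S * (D * ∑ k ∈ Finset.range t, S ^ k) := by gcongr
      _ = D * ∑ k ∈ Finset.range (t + 1), S ^ k := by rw [geom_sum_succ]; ring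

lemma abs_tsum_discounted_sub_le {a b : ℕ → ℝ} {γ S M A B : ℝ} (hγ₀ : 0 ≤ γ) (hγ₁ : γ < 1)
    (hS₀ : 0 ≤ S) (hS₁ : S ≠ 1) (hγS : γ * S < 1) (ha : ∀ t, |a t| ≤ M) (hb : ∀ t, |b t| ≤ M)
    (hab : ∀ t, |a t - b t| ≤ A + B * ∑ k ∈ Finset.range t, S ^ k) :
    |∑' t, γ ^ t * a t - ∑' t, γ ^ t * b t|
      ≤ A / (1 - γ) + B / (S - 1) * (1 / (1 - γ * S) - 1 / (1 - γ)) := by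
  have hg := hasSum_geometric_of_lt_one hγ₀ hγ₁
  have hgS := hasSum_geometric_of_lt_one (mul_nonneg hγ₀ hS₀) hγS
  have hsum : ∀ c : ℕ → ℝ, (∀ t, |c t| ≤ M) → Summable fun t => γ ^ t * c t :=
    fun c hc => (hg.summable.mul_left M).of_norm_bounded fun t => by
      rw [norm_mul, norm_pow, Real.norm_eq_abs, Real.norm_eq_abs, abs_of_nonneg hγ₀, mul_comm]
      exact mul_le_mul_of_nonneg_right (hc t) (pow_nonneg hγ₀ t)
  rw [← (hsum a ha).tsum_sub (hsum b hb), ← Real.norm_eq_abs]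
  refine (tsum_of_norm_bounded ((hg.mul_left A).add ((hgS.sub hg).mul_left (B / (S - 1))))
    fun t => ?_).trans_eq (by ring)
  rw [← mul_sub, norm_mul, norm_pow, Real.norm_eq_abs, Real.norm_eq_abs, abs_of_nonneg hγ₀]
  calc γ ^ t * |a t - b t| ≤ γ ^ t * (A + B * ∑ k ∈ Finset.range t, S ^ k) :=
        mul_le_mul_of_nonneg_left (hab t) (pow_nonneg hγ₀ t)
    _ = A * γ ^ t + B / (S - 1) * ((γ * S) ^ t - γ ^ t) := by
        rw [geom_sum_eq hS₁, mul_pow]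
        field_simp [sub_ne_zero.mpr hS₁]

end Discounting

theorem vMARL_close_to_vMF_general
    {X U : Type*} [Fintype X] [Fintype U] [DecidableEq X] [DecidableEq U]
    (N : ℕ) (hN : 0 < N)
    (M_R L_R L_P L_Q γ : ℝ)
    (hMR : 0 < M_R) (hLR : 0 < L_R) (hLP : 0 < L_P) (hLQ : 0 < L_Q)
    (hγ0 : 0 ≤ γ) (hγ1 : γ < 1)
    (hγSP : γ * ((1 + 2 * L_P) + L_Q * (1 + L_P)) < 1)
    (r : X → U → (X → ℝ) → (U → ℝ) → ℝ)
    (hbdd : ∀ x u μ ν, IsPmf μ → IsPmf ν → |r x u μ ν| ≤ M_R)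
    (hrLip : ∀ x u μ₁ μ₂ ν₁ ν₂, IsPmf μ₁ → IsPmf μ₂ → IsPmf ν₁ → IsPmf ν₂ →
      |r x u μ₁ ν₁ - r x u μ₂ ν₂|
        ≤ L_R * (l1 (fun x' => μ₁ x' - μ₂ x') + l1 (fun u' => ν₁ u' - ν₂ u')))
    (P : X → U → (X → ℝ) → (U → ℝ) → X → ℝ)
    (hP : ∀ x u μ ν, IsPmf μ → IsPmf ν → IsPmf (P x u μ ν))
    (hPLip : ∀ x u μ₁ μ₂ ν₁ ν₂, IsPmf μ₁ → IsPmf μ₂ → IsPmf ν₁ → IsPmf ν₂ →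
      l1 (fun y => P x u μ₁ ν₁ y - P x u μ₂ ν₂ y)
        ≤ L_P * (l1 (fun x' => μ₁ x' - μ₂ x') + l1 (fun u' => ν₁ u' - ν₂ u')))
    (πstar πbar : ℕ → X → (X → ℝ) → U → ℝ)
    (hπb : ∀ t x μ, IsPmf μ → IsPmf (πbar t x μ))
    (hπbLip : ∀ t x μ₁ μ₂, IsPmf μ₁ → IsPmf μ₂ →
      l1 (fun u => πbar t x μ₁ u - πbar t x μ₂ u) ≤ L_Q * l1 (fun x' => μ₁ x' - μ₂ x'))
    (x₀ : Fin N → X) (μ₀ : X → ℝ) (hμ₀ : μ₀ = emp x₀)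
    -- the two sequences induce identical mean-field flows and action choices:
    (hflow : ∀ t, muFlow P πbar μ₀ t = muFlow P πstar μ₀ t)
    (hagree : ∀ t x, πbar t x (muFlow P πstar μ₀ t) = πstar t x (muFlow P πstar μ₀ t)) :
    |vMARL γ r P πbar x₀ - vMF γ r P πstar μ₀|
      ≤ (1 / (1 - γ)) * (M_R + L_R * Real.sqrt (Fintype.card U)) / Real.sqrt N
        + ((Real.sqrt (Fintype.card X) + Real.sqrt (Fintype.card U)) / Real.sqrt N) *
            (((M_R + 2 * L_R) + L_Q * (M_R + L_R)) * (2 + L_P) /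
              (((1 + 2 * L_P) + L_Q * (1 + L_P)) - 1)) *
            (1 / (1 - γ * ((1 + 2 * L_P) + L_Q * (1 + L_P))) - 1 / (1 - γ)) := by
  set S_P := (1 + 2 * L_P) + L_Q * (1 + L_P)
  set S_R := (M_R + 2 * L_R) + L_Q * (M_R + L_R)
  set C := (√(Fintype.card X) + √(Fintype.card U)) / √N
  have hS_P : 1 < S_P := by nlinarith [mul_pos hLQ hLP]
  have hr : IsBoundedLipschitzReward M_R L_R r := ⟨hbdd, hrLip⟩
  have hPk : IsLipschitzKernel L_P P := ⟨hP, hPLip⟩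
  have hπ : ∀ t, IsAdmissiblePolicy L_Q (πbar t) := fun t => ⟨hπb t, hπbLip t⟩
  have hμ : ∀ t, IsPmf (muFlow P πbar μ₀ t) := isPmf_muFlow (hμ₀ ▸ isPmf_emp hN x₀) hP hπb
  have hD : (2 * √(Fintype.card X) + L_P * √(Fintype.card U)) / √N ≤ (2 + L_P) * C := by
    rw [← mul_div_assoc]
    gcongr
    nlinarith [Real.sqrt_nonneg (Fintype.card X), Real.sqrt_nonneg (Fintype.card U)]
  have hdev : ∀ t, ∑ s, Wproc P πbar x₀ t s * l1 (emp s - muFlow P πbar μ₀ t)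
      ≤ (2 + L_P) * C * ∑ k ∈ Finset.range t, S_P ^ k :=
    le_mul_geom_sum_of_le_add_mul (by positivity) (by simp [Wproc, muFlow, hμ₀, l1]) fun t =>
      (sum_Wproc_succ_mul_l1_le hN hLP.le hPk hπ (hμ t) x₀ t).trans (by gcongr)
  have hreward : ∀ t, |∑ s, Wproc P πbar x₀ t s * expectedReward r (πbar t) s
      - rMF r (muFlow P πbar μ₀ t) (πbar t)|
      ≤ (M_R + L_R * √(Fintype.card U)) / √N
        + S_R * ((2 + L_P) * C) * ∑ k ∈ Finset.range t, S_P ^ k := fun t =>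
    (abs_sum_Wproc_mul_expectedReward_sub_rMF_le hN hMR.le hLR.le hP hπ hr (hμ t) x₀ t).trans <|
      add_le_add (by rw [mul_div_assoc']; gcongr; linarith)
        (by rw [mul_assoc]; gcongr; exact hdev t)
  rw [vMARL_eq_tsum, ← vMF_congr hflow hagree]
  exact (abs_tsum_discounted_sub_le hγ0 hγ1 (by positivity) hS_P.ne' hγSP
    (fun t => abs_sum_Wproc_mul_expectedReward_le hN hbdd hP hπb x₀ t)
    (fun t => abs_rMF_le hbdd (hμ t) fun x => hπb t x _ (hμ t)) hreward).trans_eq (by ring)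

/-- Key approximation bound: if the two admissible policy sequences `π*` and `π̄`
induce identical mean-field flows and action choices in the infinite-agent system
(e.g. `π̄` is a localization of `π*`), then the `N`-agent value of `π̄` is close to the
mean-field value of `π*`. -/
theorem vMARL_close_to_vMF
    {X U : Type*} [Fintype X] [Fintype U] [DecidableEq X] [DecidableEq U]
    (N : ℕ) (hN : 0 < N)
    (M_R L_R L_P L_Q γ : ℝ)
    (hMR : 0 < M_R) (hLR : 0 < L_R) (hLP : 0 < L_P) (hLQ : 0 < L_Q)
    (hγ0 : 0 ≤ γ) (hγ1 : γ < 1)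
    (hγSP : γ * ((1 + 2 * L_P) + L_Q * (1 + L_P)) < 1)
    (r : X → U → (X → ℝ) → (U → ℝ) → ℝ)
    (hbdd : ∀ x u μ ν, IsPmf μ → IsPmf ν → |r x u μ ν| ≤ M_R)
    (hrLip : ∀ x u μ₁ μ₂ ν₁ ν₂, IsPmf μ₁ → IsPmf μ₂ → IsPmf ν₁ → IsPmf ν₂ →
      |r x u μ₁ ν₁ - r x u μ₂ ν₂|
        ≤ L_R * (l1 (fun x' => μ₁ x' - μ₂ x') + l1 (fun u' => ν₁ u' - ν₂ u')))
    (P : X → U → (X → ℝ) → (U → ℝ) → X → ℝ)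
    (hP : ∀ x u μ ν, IsPmf μ → IsPmf ν → IsPmf (P x u μ ν))
    (hPLip : ∀ x u μ₁ μ₂ ν₁ ν₂, IsPmf μ₁ → IsPmf μ₂ → IsPmf ν₁ → IsPmf ν₂ →
      l1 (fun y => P x u μ₁ ν₁ y - P x u μ₂ ν₂ y)
        ≤ L_P * (l1 (fun x' => μ₁ x' - μ₂ x') + l1 (fun u' => ν₁ u' - ν₂ u')))
    (πstar πbar : ℕ → X → (X → ℝ) → U → ℝ)
    (hπs : ∀ t x μ, IsPmf μ → IsPmf (πstar t x μ))
    (hπsLip : ∀ t x μ₁ μ₂, IsPmf μ₁ → IsPmf μ₂ →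
      l1 (fun u => πstar t x μ₁ u - πstar t x μ₂ u) ≤ L_Q * l1 (fun x' => μ₁ x' - μ₂ x'))
    (hπb : ∀ t x μ, IsPmf μ → IsPmf (πbar t x μ))
    (hπbLip : ∀ t x μ₁ μ₂, IsPmf μ₁ → IsPmf μ₂ →
      l1 (fun u => πbar t x μ₁ u - πbar t x μ₂ u) ≤ L_Q * l1 (fun x' => μ₁ x' - μ₂ x'))
    (x₀ : Fin N → X) (μ₀ : X → ℝ) (hμ₀ : μ₀ = emp x₀)
    -- the two sequences induce identical mean-field flows and action choices:
    (hflow : ∀ t, muFlow P πbar μ₀ t = muFlow P πstar μ₀ t)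
    (hagree : ∀ t x, πbar t x (muFlow P πstar μ₀ t) = πstar t x (muFlow P πstar μ₀ t)) :
    |vMARL γ r P πbar x₀ - vMF γ r P πstar μ₀|
      ≤ (1 / (1 - γ)) * (M_R + L_R * Real.sqrt (Fintype.card U)) / Real.sqrt N
        + ((Real.sqrt (Fintype.card X) + Real.sqrt (Fintype.card U)) / Real.sqrt N) *
            (((M_R + 2 * L_R) + L_Q * (M_R + L_R)) * (2 + L_P) /
              (((1 + 2 * L_P) + L_Q * (1 + L_P)) - 1)) *
            (1 / (1 - γ * ((1 + 2 * L_P) + L_Q * (1 + L_P))) - 1 / (1 - γ)) :=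
  vMARL_close_to_vMF_general N hN M_R L_R L_P L_Q γ hMR hLR hLP hLQ hγ0 hγ1 hγSP r hbdd hrLip P hP
    hPLip πstar πbar hπb hπbLip x₀ μ₀ hμ₀ hflow hagree
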